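/- Let 1 ≤ p < q < ∞ and d ≥ 1. Then the Morrey space M^p_q(ℝ^d) is not uniformly convex. (This follows since its James constant equals 2, so it is not uniformly non-square, and uniformly convex spaces are uniformly non-square.) -/

import Mathlib

/-!
Let `u`, `v` be the normalised indicators of two unit balls lying far apart. A ball meeting both
of them has a large radius `R`, and then the factor `|B|^(1/q - 1/p)` absorbs the doubled mass,
so `‖u + v‖ = ‖u - v‖ = 1`. The midpoint of `u + v` and `u - v` is `u`, again of norm `1`, while
their difference `2 v` has norm `≥ 1`: the modulus of convexity vanishes at `ε = 1`.

On `B(a, R)`, the Morrey value of a normalised indicator `c 1_S` is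
`(|S ∩ B(a, R)| / |B(0, R ^ (1 - p / q))|) ^ (1 / p)`, so every norm bound is a comparison of
volumes.
-/
open MeasureTheory Metric ENNReal

/-- The small Morrey norm: sup over centers `a` and radii `R ∈ (0,1)` of
`|B(a,R)|^(1/q-1/p) (∫_{B(a,R)} |f|^p)^(1/p)`, valued in `ℝ≥0∞`. -/
noncomputable def smallMorreyNorm (d : ℕ) (p q : ℝ)
    (f : EuclideanSpace ℝ (Fin d) → ℝ) : ℝ≥0∞ :=
  ⨆ (a : EuclideanSpace ℝ (Fin d)) (R : ℝ) (_ : 0 < R) (_ : R < 1),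
    volume (ball a R) ^ (1 / q - 1 / p) *
      (∫⁻ y in ball a R, ENNReal.ofReal (|f y| ^ p)) ^ (1 / p)

/-- The (classical) Morrey norm: sup over all centers `a` and radii `R > 0`. -/
noncomputable def morreyNorm (d : ℕ) (p q : ℝ)
    (f : EuclideanSpace ℝ (Fin d) → ℝ) : ℝ≥0∞ :=
  ⨆ (a : EuclideanSpace ℝ (Fin d)) (R : ℝ) (_ : 0 < R),
    volume (ball a R) ^ (1 / q - 1 / p) *
      (∫⁻ y in ball a R, ENNReal.ofReal (|f y| ^ p)) ^ (1 / p)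

section BallVolume

variable {E : Type*} [NormedAddCommGroup E] [MeasurableSpace E] [BorelSpace E]
  (μ : Measure E) [μ.IsAddHaarMeasure]

lemma measure_ball_inter_ball_le_ball_rpow {s : ℝ} (hs₀ : 0 ≤ s) (hs₁ : s ≤ 1) (c b : E)
    {R : ℝ} (hR : 0 < R) : μ (ball c 1 ∩ ball b R) ≤ μ (ball (0 : E) (R ^ s)) := by
  rcases le_total R 1 with hR1 | hR1
  · calc μ (ball c 1 ∩ ball b R) ≤ μ (ball b R) := measure_mono Set.inter_subset_right
      _ = μ (ball (0 : E) R) := Measure.addHaar_ball_center μ b R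
      _ ≤ μ (ball (0 : E) (R ^ s)) :=
        measure_mono (ball_subset_ball (Real.self_le_rpow_of_le_one hR.le hR1 hs₁))
  · calc μ (ball c 1 ∩ ball b R) ≤ μ (ball c 1) := measure_mono Set.inter_subset_left
      _ = μ (ball (0 : E) 1) := Measure.addHaar_ball_center μ c 1
      _ ≤ μ (ball (0 : E) (R ^ s)) :=
        measure_mono (ball_subset_ball (Real.one_le_rpow hR1 hs₀))

variable [NormedSpace ℝ E] [FiniteDimensional ℝ E] [Nontrivial E]

lemma measure_ball_add_measure_ball_le (c₁ c₂ : E) :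
    μ (ball c₁ 1) + μ (ball c₂ 1) ≤ μ (ball (0 : E) 2) := by
  rw [Measure.addHaar_ball_center μ c₁, Measure.addHaar_ball_center μ c₂, ← two_mul,
    Measure.addHaar_ball_of_pos μ _ two_pos]
  gcongr
  rw [← ENNReal.ofReal_ofNat 2]
  gcongr
  exact le_self_pow₀ one_le_two Module.finrank_pos.ne'

/-- A ball meeting both unit balls has radius `R ≥ 2 ^ s⁻¹`, so `ball 0 (R ^ s)` contains two
disjoint unit balls' worth of volume. -/
lemma measure_union_ball_inter_ball_le_ball_rpow {s : ℝ} (hs₀ : 0 < s) (hs₁ : s ≤ 1)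
    {c₁ c₂ : E} (hfar : 2 * 2 ^ s⁻¹ + 2 ≤ dist c₁ c₂) (b : E) {R : ℝ} (hR : 0 < R) :
    μ ((ball c₁ 1 ∪ ball c₂ 1) ∩ ball b R) ≤ μ (ball (0 : E) (R ^ s)) := by
  rw [Set.union_inter_distrib_right]
  by_cases h₂ : Disjoint (ball c₂ 1) (ball b R)
  · rw [h₂.inter_eq, Set.union_empty]
    exact measure_ball_inter_ball_le_ball_rpow μ hs₀.le hs₁ c₁ b hR
  by_cases h₁ : Disjoint (ball c₁ 1) (ball b R)
  · rw [h₁.inter_eq, Set.empty_union]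
    exact measure_ball_inter_ball_le_ball_rpow μ hs₀.le hs₁ c₂ b hR
  have hR_large : 2 ^ s⁻¹ ≤ R := by
    have := dist_triangle_right c₁ c₂ b
    linarith [lt_of_not_ge (mt ball_disjoint_ball h₁), lt_of_not_ge (mt ball_disjoint_ball h₂)]
  have h2R : 2 ≤ R ^ s := by
    calc (2 : ℝ) = (2 ^ s⁻¹) ^ s := (Real.rpow_inv_rpow zero_le_two hs₀.ne').symm
      _ ≤ R ^ s := Real.rpow_le_rpow (by positivity) hR_large hs₀.le
  calc μ (ball c₁ 1 ∩ ball b R ∪ ball c₂ 1 ∩ ball b R)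
      ≤ μ (ball c₁ 1) + μ (ball c₂ 1) :=
        (measure_union_le _ _).trans (add_le_add (measure_mono Set.inter_subset_left)
          (measure_mono Set.inter_subset_left))
    _ ≤ μ (ball (0 : E) 2) := measure_ball_add_measure_ball_le μ c₁ c₂
    _ ≤ μ (ball (0 : E) (R ^ s)) := measure_mono (ball_subset_ball h2R)

end BallVolume

lemma abs_indicator_add_eq_abs_indicator_sub {α : Type*} {S T : Set α} (hST : Disjoint S T)
    (f g : α → ℝ) (x : α) :
    |S.indicator f x + T.indicator g x| = |S.indicator f x - T.indicator g x| := by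
  by_cases hx : x ∈ S
  · simp [Set.indicator_of_notMem (Set.disjoint_left.1 hST hx)]
  · simp [Set.indicator_of_notMem hx]

lemma setLIntegral_ofReal_abs_indicator_rpow {α : Type*} [MeasurableSpace α] {μ : Measure α}
    {p : ℝ} (hp : p ≠ 0) {S : Set α} (hS : MeasurableSet S) (c : ℝ) (T : Set α) :
    ∫⁻ y in T, ENNReal.ofReal (|S.indicator (fun _ => c) y| ^ p) ∂μ
      = ENNReal.ofReal (|c| ^ p) * μ (S ∩ T) := by
  have h : ∀ y, ENNReal.ofReal (|S.indicator (fun _ => c) y| ^ p)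
      = S.indicator (fun _ => ENNReal.ofReal (|c| ^ p)) y := fun y => by
    by_cases hy : y ∈ S <;> simp [hy, Real.zero_rpow hp]
  simp_rw [h]
  rw [setLIntegral_indicator hS, setLIntegral_const]

section Morrey

variable {d : ℕ} {p q : ℝ}

noncomputable def morreyBallValue (d : ℕ) (p q : ℝ) (f : EuclideanSpace ℝ (Fin d) → ℝ)
    (a : EuclideanSpace ℝ (Fin d)) (R : ℝ) : ℝ≥0∞ :=
  volume (ball a R) ^ (1 / q - 1 / p) *
    (∫⁻ y in ball a R, ENNReal.ofReal (|f y| ^ p)) ^ (1 / p)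

lemma morreyBallValue_le_morreyNorm (f : EuclideanSpace ℝ (Fin d) → ℝ)
    (a : EuclideanSpace ℝ (Fin d)) {R : ℝ} (hR : 0 < R) :
    morreyBallValue d p q f a R ≤ morreyNorm d p q f :=
  le_iSup₂_of_le a R (le_iSup_of_le hR le_rfl)

lemma morreyNorm_le {f : EuclideanSpace ℝ (Fin d) → ℝ} {C : ℝ≥0∞}
    (h : ∀ a R, 0 < R → morreyBallValue d p q f a R ≤ C) : morreyNorm d p q f ≤ C :=
  iSup₂_le fun a R => iSup_le (h a R)

lemma morreyNorm_mono (hp : 0 ≤ p) {f g : EuclideanSpace ℝ (Fin d) → ℝ}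
    (h : ∀ x, |f x| ≤ |g x|) : morreyNorm d p q f ≤ morreyNorm d p q g := by
  refine morreyNorm_le fun a R hR => le_trans ?_ (morreyBallValue_le_morreyNorm g a hR)
  unfold morreyBallValue
  gcongr _ * (∫⁻ _ in _, ?_) ^ _
  exact ENNReal.ofReal_le_ofReal (Real.rpow_le_rpow (abs_nonneg _) (h _) hp)

lemma morreyNorm_congr_abs {f g : EuclideanSpace ℝ (Fin d) → ℝ} (h : ∀ x, |f x| = |g x|) :
    morreyNorm d p q f = morreyNorm d p q g := by
  simp only [morreyNorm, h]

/-- Normalised so that the indicator of a unit ball has Morrey norm `1`. -/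
noncomputable def normalizedIndicator (d : ℕ) (q : ℝ) (S : Set (EuclideanSpace ℝ (Fin d))) :
    EuclideanSpace ℝ (Fin d) → ℝ :=
  S.indicator fun _ => (volume (ball (0 : EuclideanSpace ℝ (Fin d)) 1) ^ (-q⁻¹)).toReal

lemma volume_ball_rpow_mul_volume_ball_rpow_eq_one (hp : p ≠ 0) (a : EuclideanSpace ℝ (Fin d))
    {R : ℝ} (hR : 0 < R) :
    volume (ball a R) ^ (1 / q - 1 / p) * volume (ball (0 : EuclideanSpace ℝ (Fin d)) 1) ^ (-q⁻¹) *
      volume (ball (0 : EuclideanSpace ℝ (Fin d)) (R ^ (1 - p / q))) ^ (1 / p) = 1 := by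
  set ω := volume (ball (0 : EuclideanSpace ℝ (Fin d)) 1)
  have hω₀ : ω ≠ 0 := (measure_ball_pos _ _ one_pos).ne'
  have hω : ω ≠ ⊤ := measure_ball_lt_top.ne
  have hball : ∀ r : ℝ, 0 < r → volume (ball (0 : EuclideanSpace ℝ (Fin d)) r)
      = ENNReal.ofReal (r ^ d) * ω := fun r hr => by
    rw [Measure.addHaar_ball_of_pos _ _ hr, finrank_euclideanSpace_fin]
  have hRd : 0 < R ^ d := pow_pos hR d
  have hRsd : 0 < (R ^ (1 - p / q)) ^ d := pow_pos (Real.rpow_pos_of_pos hR _) d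
  rw [Measure.addHaar_ball_center, hball R hR, hball _ (Real.rpow_pos_of_pos hR _),
    ENNReal.mul_rpow_of_ne_top ENNReal.ofReal_ne_top hω,
    ENNReal.mul_rpow_of_ne_top ENNReal.ofReal_ne_top hω,
    ENNReal.ofReal_rpow_of_pos hRd, ENNReal.ofReal_rpow_of_pos hRsd]
  calc _ = ENNReal.ofReal ((R ^ d) ^ (1 / q - 1 / p) * ((R ^ (1 - p / q)) ^ d) ^ (1 / p)) *
        (ω ^ (1 / q - 1 / p) * ω ^ (-q⁻¹) * ω ^ (1 / p)) := by
        rw [ENNReal.ofReal_mul (by positivity)]; ring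
    _ = 1 := by
        rw [← ENNReal.rpow_add _ _ hω₀ hω, ← ENNReal.rpow_add _ _ hω₀ hω,
          ← Real.rpow_natCast, ← Real.rpow_natCast, ← Real.rpow_mul hR.le,
          ← Real.rpow_mul hR.le, ← Real.rpow_mul hR.le, ← Real.rpow_add hR]
        have hexp : (d : ℝ) * (1 / q - 1 / p) + (1 - p / q) * d * (1 / p) = 0 := by
          field_simp
          ring
        rw [hexp, Real.rpow_zero, ENNReal.ofReal_one, one_mul,
          show 1 / q - 1 / p + -q⁻¹ + 1 / p = 0 by ring, ENNReal.rpow_zero]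

lemma morreyBallValue_normalizedIndicator (hp : 0 < p) {S : Set (EuclideanSpace ℝ (Fin d))}
    (hS : MeasurableSet S) (a : EuclideanSpace ℝ (Fin d)) {R : ℝ} (hR : 0 < R) :
    morreyBallValue d p q (normalizedIndicator d q S) a R
      = (volume (S ∩ ball a R) / volume (ball (0 : EuclideanSpace ℝ (Fin d)) (R ^ (1 - p / q))))
          ^ (1 / p) := by
  set ω := volume (ball (0 : EuclideanSpace ℝ (Fin d)) 1)
  have hC : ω ^ (-q⁻¹) ≠ ⊤ :=
    ENNReal.rpow_ne_top_of_ne_zero (measure_ball_pos _ _ one_pos).ne' measure_ball_lt_top.ne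
  have hp' : 0 ≤ 1 / p := by positivity
  have hint : ∫⁻ y in ball a R, ENNReal.ofReal (|normalizedIndicator d q S y| ^ p)
      = (ω ^ (-q⁻¹)) ^ p * volume (S ∩ ball a R) := by
    rw [normalizedIndicator, setLIntegral_ofReal_abs_indicator_rpow hp.ne' hS,
      abs_of_nonneg ENNReal.toReal_nonneg, ← ENNReal.ofReal_rpow_of_nonneg ENNReal.toReal_nonneg
        hp.le, ENNReal.ofReal_toReal hC]
  rw [morreyBallValue, hint, ENNReal.mul_rpow_of_nonneg _ _ hp',
    ENNReal.div_rpow_of_nonneg _ _ hp', ← ENNReal.rpow_mul, mul_one_div_cancel hp.ne',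
    ENNReal.rpow_one, ENNReal.div_eq_inv_mul,
    ← ENNReal.eq_inv_of_mul_eq_one_left (volume_ball_rpow_mul_volume_ball_rpow_eq_one hp.ne' a hR)]
  ring

lemma morreyNorm_normalizedIndicator_eq_one (hp : 0 < p) {S : Set (EuclideanSpace ℝ (Fin d))}
    (hS : MeasurableSet S) {a : EuclideanSpace ℝ (Fin d)} (ha : ball a 1 ⊆ S)
    (hS_le : ∀ b R, 0 < R →
      volume (S ∩ ball b R) ≤ volume (ball (0 : EuclideanSpace ℝ (Fin d)) (R ^ (1 - p / q)))) :
    morreyNorm d p q (normalizedIndicator d q S) = 1 := by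
  apply le_antisymm
  · refine morreyNorm_le fun b R hR => ?_
    rw [morreyBallValue_normalizedIndicator hp hS b hR]
    exact ENNReal.rpow_le_one (ENNReal.div_le_of_le_mul (by simpa using hS_le b R hR))
      (by positivity)
  · calc (1 : ℝ≥0∞) = morreyBallValue d p q (normalizedIndicator d q S) a 1 := by
          rw [morreyBallValue_normalizedIndicator hp hS a one_pos, Set.inter_eq_right.2 ha,
            Real.one_rpow, Measure.addHaar_ball_center, ENNReal.div_self
              (measure_ball_pos _ _ one_pos).ne' measure_ball_lt_top.ne, ENNReal.one_rpow]
      _ ≤ _ := morreyBallValue_le_morreyNorm _ a one_pos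

lemma morreyNorm_normalizedIndicator_ball (hp : 0 < p) (hpq : p ≤ q)
    (c : EuclideanSpace ℝ (Fin d)) :
    morreyNorm d p q (normalizedIndicator d q (ball c 1)) = 1 :=
  morreyNorm_normalizedIndicator_eq_one hp measurableSet_ball subset_rfl fun b _ hR =>
    measure_ball_inter_ball_le_ball_rpow volume
      (sub_nonneg.2 ((div_le_one (hp.trans_le hpq)).2 hpq))
      (sub_le_self _ (div_nonneg hp.le (hp.le.trans hpq))) c b hR

lemma morreyNorm_normalizedIndicator_union_ball [Nontrivial (EuclideanSpace ℝ (Fin d))]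
    (hp : 0 < p) (hpq : p < q) {c₁ c₂ : EuclideanSpace ℝ (Fin d)}
    (hfar : 2 * 2 ^ (1 - p / q)⁻¹ + 2 ≤ dist c₁ c₂) :
    morreyNorm d p q (normalizedIndicator d q (ball c₁ 1 ∪ ball c₂ 1)) = 1 :=
  morreyNorm_normalizedIndicator_eq_one hp (measurableSet_ball.union measurableSet_ball)
    Set.subset_union_left fun b _ hR =>
    measure_union_ball_inter_ball_le_ball_rpow volume
      (sub_pos.2 ((div_lt_one (hp.trans hpq)).2 hpq))
      (sub_le_self _ (div_nonneg hp.le (hp.trans hpq).le)) hfar b hR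

end Morrey

/-- the Morrey space is not uniformly convex: it is not the case
that for every `ε > 0` there is `δ > 0` such that unit vectors `f, g` with
`‖f-g‖ ≥ ε` satisfy `‖(f+g)/2‖ ≤ 1 - δ`. -/
theorem morrey_not_uniformlyConvex (d : ℕ) (p q : ℝ) (hp : 1 ≤ p) (hpq : p < q)
    (hd : 1 ≤ d) :
    ¬ ∀ ε : ℝ, 0 < ε → ∃ δ : ℝ, 0 < δ ∧
      ∀ f g : EuclideanSpace ℝ (Fin d) → ℝ,
        morreyNorm d p q f = 1 → morreyNorm d p q g = 1 →
          ENNReal.ofReal ε ≤ morreyNorm d p q (f - g) →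
            morreyNorm d p q (fun x => (f x + g x) / 2) ≤ ENNReal.ofReal (1 - δ) := by
  intro H
  obtain ⟨δ, hδ, H⟩ := H 1 one_pos
  have hp₀ : 0 < p := one_pos.trans_le hp
  have : Nonempty (Fin d) := ⟨⟨0, hd⟩⟩
  obtain ⟨x₀, hx₀⟩ := exists_norm_eq (EuclideanSpace ℝ (Fin d))
    (c := 2 * 2 ^ (1 - p / q)⁻¹ + 2) (by positivity)
  have hfar : 2 * 2 ^ (1 - p / q)⁻¹ + 2 ≤ dist 0 x₀ := by rw [dist_zero_left, hx₀]
  have hdisj : Disjoint (ball 0 1) (ball x₀ 1) := ball_disjoint_ball (by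
    linarith [Real.rpow_pos_of_pos two_pos (1 - p / q)⁻¹])
  set u := normalizedIndicator d q (ball 0 1)
  set v := normalizedIndicator d q (ball x₀ 1)
  have hu_add_v : morreyNorm d p q (u + v) = 1 := by
    have h : u + v = normalizedIndicator d q (ball 0 1 ∪ ball x₀ 1) := by
      rw [normalizedIndicator, Set.indicator_union_of_disjoint hdisj]
      rfl
    rw [h, morreyNorm_normalizedIndicator_union_ball hp₀ hpq hfar]
  have hu_sub_v : morreyNorm d p q (u - v) = 1 :=
    (morreyNorm_congr_abs fun x =>
      (abs_indicator_add_eq_abs_indicator_sub hdisj _ _ x).symm).trans hu_add_v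
  have hsep : ENNReal.ofReal 1 ≤ morreyNorm d p q ((u + v) - (u - v)) := by
    rw [ENNReal.ofReal_one, ← morreyNorm_normalizedIndicator_ball hp₀ hpq.le x₀]
    refine morreyNorm_mono hp₀.le fun x => ?_
    rw [Pi.sub_apply, Pi.add_apply, Pi.sub_apply, show u x + v x - (u x - v x) = 2 * v x by ring,
      abs_mul]
    exact le_mul_of_one_le_left (abs_nonneg _) (by norm_num)
  have hmid : (fun x => ((u + v) x + (u - v) x) / 2) = u := by
    funext x
    simp only [Pi.add_apply, Pi.sub_apply]
    ring
  have h := H (u + v) (u - v) hu_add_v hu_sub_v hsep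
  rw [hmid, morreyNorm_normalizedIndicator_ball hp₀ hpq.le] at h
  exact (ENNReal.ofReal_lt_one.2 (by linarith)).not_ge h
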